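/- For all real x ≥ y ≥ 0, (1 - Φ(x - y))/(1 - Φ(x)) ≤ 2(1 + x) · exp(xy - y²/2), where Φ is the standard normal CDF. -/

import Mathlib

open Real MeasureTheory Set Filter Topology

/-- The standard normal cumulative distribution function. -/
noncomputable def stdNormalCDF (x : ℝ) : ℝ :=
  ∫ t in Set.Iic x, (Real.sqrt (2 * Real.pi))⁻¹ * Real.exp (-t ^ 2 / 2)

/-!
Both tail bounds `e^{-u²/2}/(1+u) ≤ ∫_u^∞ e^{-t²/2} dt ≤ (4/3) e^{-u²/2}/(1+u)` for `u ≥ 0` follow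
from the fact that the difference of the two sides is monotone (compare derivatives) and vanishes
at infinity. The theorem is then the upper bound at `x - y` divided by the lower bound at `x`,
using `e^{-(x-y)²/2} = e^{-x²/2} e^{xy - y²/2}`.
-/

lemma nonneg_of_hasDerivAt_nonpos_of_tendsto_zero {f f' : ℝ → ℝ} {a : ℝ}
    (hf : ∀ x, a ≤ x → HasDerivAt f (f' x) x) (hf' : ∀ x, a ≤ x → f' x ≤ 0)
    (hlim : Tendsto f atTop (𝓝 0)) : 0 ≤ f a := by
  have hanti : AntitoneOn f (Ici a) := by
    refine antitoneOn_of_hasDerivWithinAt_nonpos (f' := f') (convex_Ici a)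
      (fun x hx => (hf x hx).continuousAt.continuousWithinAt) (fun x hx => ?_) (fun x hx => ?_)
    all_goals rw [interior_Ici] at hx
    · exact (hf x (le_of_lt hx)).hasDerivWithinAt
    · exact hf' x (le_of_lt hx)
  refine le_of_tendsto hlim ?_
  filter_upwards [eventually_ge_atTop a] with x hx
  exact hanti self_mem_Ici hx hx

lemma integrable_exp_neg_sq_div_two : Integrable (fun t : ℝ => exp (-t ^ 2 / 2)) := by
  refine (integrable_exp_neg_mul_sq (by norm_num : (0:ℝ) < 1 / 2)).congr
    (Eventually.of_forall fun t => ?_)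
  ring_nf

lemma integral_exp_neg_sq_div_two : ∫ t : ℝ, exp (-t ^ 2 / 2) = √(2 * π) := by
  have h := integral_gaussian (1 / 2)
  rw [show π / (1 / 2) = 2 * π by ring] at h
  rw [← h]
  congr 1; ext t; ring_nf

lemma tendsto_exp_neg_sq_div_two_atTop : Tendsto (fun v : ℝ => exp (-v ^ 2 / 2)) atTop (𝓝 0) :=
  tendsto_exp_atBot.comp <|
    (tendsto_neg_atTop_atBot.comp (tendsto_pow_atTop two_ne_zero)).atBot_div_const two_pos

noncomputable def gaussTail (u : ℝ) : ℝ := ∫ t in Ioi u, exp (-t ^ 2 / 2)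

lemma gaussTail_eq_sub_intervalIntegral (u : ℝ) :
    gaussTail u = gaussTail 0 - ∫ t in (0:ℝ)..u, exp (-t ^ 2 / 2) := by
  have hi := integrable_exp_neg_sq_div_two
  have hu := intervalIntegral.integral_Iic_add_Ioi hi.integrableOn hi.integrableOn (b := u)
  have h0 := intervalIntegral.integral_Iic_add_Ioi hi.integrableOn hi.integrableOn (b := 0)
  have h0u := intervalIntegral.integral_Iic_sub_Iic (hi.integrableOn (s := Iic 0))
    (hi.integrableOn (s := Iic u))
  simp only [gaussTail]
  linarith

lemma one_sub_stdNormalCDF (z : ℝ) : 1 - stdNormalCDF z = (√(2 * π))⁻¹ * gaussTail z := by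
  have hi := integrable_exp_neg_sq_div_two
  have hsplit := intervalIntegral.integral_Iic_add_Ioi hi.integrableOn hi.integrableOn (b := z)
  rw [integral_exp_neg_sq_div_two] at hsplit
  have hIic : ∫ t in Iic z, exp (-t ^ 2 / 2) = √(2 * π) - gaussTail z := by
    rw [gaussTail]; linarith
  have hs : √(2 * π) ≠ 0 := (Real.sqrt_pos.2 (by positivity)).ne'
  rw [stdNormalCDF, integral_const_mul, hIic]
  field_simp
  ring

lemma hasDerivAt_gaussTail (u : ℝ) : HasDerivAt gaussTail (-exp (-u ^ 2 / 2)) u := by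
  have hd : HasDerivAt (fun v => ∫ t in (0:ℝ)..v, exp (-t ^ 2 / 2)) (exp (-u ^ 2 / 2)) u :=
    intervalIntegral.integral_hasDerivAt_right integrable_exp_neg_sq_div_two.intervalIntegrable
      integrable_exp_neg_sq_div_two.1.stronglyMeasurableAtFilter (by fun_prop)
  exact (hd.const_sub _).congr_of_eventuallyEq
    (Eventually.of_forall gaussTail_eq_sub_intervalIntegral)

lemma tendsto_gaussTail_atTop : Tendsto gaussTail atTop (𝓝 0) := by
  have h := (intervalIntegral_tendsto_integral_Ioi 0
    integrable_exp_neg_sq_div_two.integrableOn tendsto_id).const_sub (gaussTail 0)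
  rw [← gaussTail, sub_self] at h
  exact h.congr fun u => (gaussTail_eq_sub_intervalIntegral u).symm

lemma hasDerivAt_div_one_add_mul_exp_sub_gaussTail (c : ℝ) {v : ℝ} (hv : 1 + v ≠ 0) :
    HasDerivAt (fun w => c / (1 + w) * exp (-w ^ 2 / 2) - gaussTail w)
      (exp (-v ^ 2 / 2) * ((1 + v) ^ 2 - c * (1 + v + v ^ 2)) / (1 + v) ^ 2) v := by
  have hfrac := (hasDerivAt_const v c).div ((hasDerivAt_id' v).const_add 1) hv
  have hexp := ((hasDerivAt_pow 2 v).neg.div_const 2).exp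
  refine ((hfrac.mul hexp).sub (hasDerivAt_gaussTail v)).congr_deriv ?_
  simp only [Pi.div_apply, Pi.neg_apply]
  field_simp
  ring

lemma tendsto_div_one_add_mul_exp_sub_gaussTail (c : ℝ) :
    Tendsto (fun w => c / (1 + w) * exp (-w ^ 2 / 2) - gaussTail w) atTop (𝓝 0) := by
  have hfrac : Tendsto (fun w : ℝ => c / (1 + w)) atTop (𝓝 0) :=
    tendsto_const_nhds.div_atTop (tendsto_atTop_add_const_left _ _ tendsto_id)
  simpa using (hfrac.mul tendsto_exp_neg_sq_div_two_atTop).sub tendsto_gaussTail_atTop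

lemma gaussTail_le {u : ℝ} (hu : 0 ≤ u) : gaussTail u ≤ 4 / 3 / (1 + u) * exp (-u ^ 2 / 2) := by
  have key := nonneg_of_hasDerivAt_nonpos_of_tendsto_zero
    (fun v (hv : u ≤ v) => hasDerivAt_div_one_add_mul_exp_sub_gaussTail (4 / 3) (by linarith))
    (fun v hv => ?_) (tendsto_div_one_add_mul_exp_sub_gaussTail (4 / 3))
  · simpa using key
  have hquad : (1 + v) ^ 2 - 4 / 3 * (1 + v + v ^ 2) ≤ 0 := by nlinarith [sq_nonneg (1 - v)]
  exact div_nonpos_of_nonpos_of_nonneg (mul_nonpos_of_nonneg_of_nonpos (exp_pos _).le hquad)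
    (sq_nonneg _)

lemma exp_div_one_add_le_gaussTail {u : ℝ} (hu : 0 ≤ u) :
    exp (-u ^ 2 / 2) / (1 + u) ≤ gaussTail u := by
  have key := nonneg_of_hasDerivAt_nonpos_of_tendsto_zero
    (f := fun w => -(1 / (1 + w) * exp (-w ^ 2 / 2) - gaussTail w))
    (fun v (hv : u ≤ v) => (hasDerivAt_div_one_add_mul_exp_sub_gaussTail 1 (by linarith)).neg)
    (fun v hv => ?_) (by simpa using (tendsto_div_one_add_mul_exp_sub_gaussTail 1).neg)
  · rw [neg_sub, sub_nonneg] at key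
    rwa [one_div_mul_eq_div] at key
  have hquad : (1 + v) ^ 2 - 1 * (1 + v + v ^ 2) = v := by ring
  rw [hquad, neg_nonpos]
  have : 0 ≤ v := hu.trans hv
  positivity

/-- For `x ≥ y ≥ 0`, `(1 - Φ(x-y))/(1 - Φ(x)) ≤ 2(1+x) exp(xy - y²/2)`. -/
theorem stmt11 (x y : ℝ) (hy : 0 ≤ y) (hxy : y ≤ x) :
    (1 - stdNormalCDF (x - y)) / (1 - stdNormalCDF x) ≤
      2 * (1 + x) * Real.exp (x * y - y ^ 2 / 2) := by
  have hx : 0 ≤ x := hy.trans hxy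
  have hlower := exp_div_one_add_le_gaussTail hx
  have hpos : 0 < gaussTail x := lt_of_lt_of_le (by positivity) hlower
  have hupper : gaussTail (x - y) ≤ 2 * exp (-(x - y) ^ 2 / 2) := by
    refine (gaussTail_le (sub_nonneg.2 hxy)).trans (mul_le_mul_of_nonneg_right ?_ (exp_pos _).le)
    rw [div_le_iff₀ (by linarith)]
    linarith
  rw [one_sub_stdNormalCDF, one_sub_stdNormalCDF, mul_div_mul_left _ _ (by positivity),
    div_le_iff₀ hpos]
  calc gaussTail (x - y) ≤ 2 * exp (-(x - y) ^ 2 / 2) := hupper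
    _ = 2 * (1 + x) * exp (x * y - y ^ 2 / 2) * (exp (-x ^ 2 / 2) / (1 + x)) := by
      rw [mul_div_assoc', mul_right_comm, mul_assoc, ← exp_add]
      field_simp
      ring_nf
    _ ≤ 2 * (1 + x) * exp (x * y - y ^ 2 / 2) * gaussTail x := by gcongr
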